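/- arXiv:2111.06743 — 2 statements merged into one kernel-verified Lean document; each statement's English description precedes it below -/
import Mathlib

section
/- Let M ≥ 2 be an integer, and let Z be a real random variable with density f_Z(z) = ((M−1)/M)·(1 − z/M)^{M−2} on [0, M]. Let a₁ > 0 and b₁ > 0 be constants with b₁·M < 1. Then the random variable P_EH = a₁·Z / (1 − b₁·Z) has probability density function f_{P_EH}(p) = ((M−1)·a₁) / (M·(a₁ + b₁·p)²) · (1 − p/(M·(a₁ + b₁·p)))^{M−2} for p in the interval [0, a₁M/(1 − b₁M)] (and 0 elsewhere). -/
/-!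
On `[0, M]` the map `g z = a₁ z / (1 - b₁ z)` is increasing with `g' z = a₁ / (1 - b₁ z)²`, so by
the one-dimensional change of variables a density `f` represents the law of `g(Z)` as soon as
`g' z · f (g z) = f_Z z` on `[0, M]` and `f` vanishes off `g([0, M]) = [0, a₁M/(1 - b₁M)]`.
Along `p = g z` one has `a₁ + b₁ p = a₁ / (1 - b₁ z)` and `p / (M (a₁ + b₁ p)) = z / M`,
which turns that identity into a cancellation.
-/

open MeasureTheory ProbabilityTheory Set

open scoped ENNReal

theorem setLIntegral_inter_eq_of_support_subset {α : Type*} [MeasurableSpace α] {μ : Measure α}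
    {s A : Set α} {f : α → ℝ≥0∞} (hA : MeasurableSet A) (hf : Function.support f ⊆ s) :
    ∫⁻ x in s ∩ A, f x ∂μ = ∫⁻ x in A, f x ∂μ := by
  rw [← Measure.restrict_restrict' hA, setLIntegral_eq_of_support_subset hf]

theorem map_withDensity_eq_withDensity_of_monotoneOn {s : Set ℝ} {g g' : ℝ → ℝ}
    {f h : ℝ → ℝ≥0∞} (hs : MeasurableSet s) (hg : Measurable g)
    (hg' : ∀ x ∈ s, HasDerivWithinAt g (g' x) s x) (hmono : MonotoneOn g s)
    (hf : Function.support f ⊆ s) (hh : Function.support h ⊆ g '' s)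
    (hfh : ∀ x ∈ s, ENNReal.ofReal (g' x) * h (g x) = f x) :
    (volume.withDensity f).map g = volume.withDensity h := by
  ext A hA
  have hsA : s ∩ g ⁻¹' A ⊆ s := inter_subset_left
  calc (volume.withDensity f).map g A
      = ∫⁻ x in s ∩ g ⁻¹' A, f x := by
        rw [Measure.map_apply hg hA, withDensity_apply _ (hg hA),
          setLIntegral_inter_eq_of_support_subset (hg hA) hf]
    _ = ∫⁻ x in s ∩ g ⁻¹' A, ENNReal.ofReal (g' x) * h (g x) :=
        setLIntegral_congr_fun (hs.inter (hg hA)) fun x hx => (hfh x hx.1).symm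
    _ = ∫⁻ y in g '' s ∩ A, h y := by
        rw [← image_inter_preimage, lintegral_image_eq_lintegral_deriv_mul_of_monotoneOn
          (hs.inter (hg hA)) (fun x hx => (hg' x hx.1).mono hsA) (hmono.mono hsA)]
    _ = volume.withDensity h A := by
        rw [withDensity_apply _ hA, setLIntegral_inter_eq_of_support_subset hA hh]

theorem hasDerivAt_mul_div_one_sub (a b : ℝ) {z : ℝ} (hz : 1 - b * z ≠ 0) :
    HasDerivAt (fun z => a * z / (1 - b * z)) (a / (1 - b * z) ^ 2) z := by
  refine (((hasDerivAt_id' z).const_mul a).div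
    (((hasDerivAt_id' z).const_mul b).const_sub 1) hz).congr_deriv ?_
  ring

theorem monotoneOn_mul_div_one_sub (b : ℝ) {a : ℝ} (ha : 0 ≤ a) :
    MonotoneOn (fun z => a * z / (1 - b * z)) {z | b * z < 1} := by
  intro x hx y hy hxy
  simp only [mem_ofPred_eq] at hx hy
  rw [div_le_div_iff₀ (by linarith) (by linarith)]
  nlinarith

theorem mul_lt_one_of_mem_Icc {b m z : ℝ} (hbm : b * m < 1) (hz : z ∈ Icc 0 m) : b * z < 1 := by
  rcases le_total 0 b with hb | hb
  · nlinarith [mul_le_mul_of_nonneg_left hz.2 hb]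
  · nlinarith [mul_nonpos_of_nonpos_of_nonneg hb hz.1]

theorem mul_density_comp_mul_div_one_sub (c m : ℝ) (n : ℕ) {a b z : ℝ} (ha : a ≠ 0)
    (hz : 1 - b * z ≠ 0) :
    a / (1 - b * z) ^ 2 * (c * a / (m * (a + b * (a * z / (1 - b * z))) ^ 2)
      * (1 - a * z / (1 - b * z) / (m * (a + b * (a * z / (1 - b * z))))) ^ n)
      = c / m * (1 - z / m) ^ n := by
  have hsum : a + b * (a * z / (1 - b * z)) = a / (1 - b * z) := by
    field_simp
    ring
  have hratio : a * z / (1 - b * z) / (m * (a / (1 - b * z))) = z / m := by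
    rw [mul_div_right_comm, mul_comm m, mul_div_mul_left z m (div_ne_zero ha hz)]
  rw [hsum, hratio]
  field_simp

theorem harvested_power_density_general
    {Ω : Type*} [MeasureSpace Ω]
    (M : ℕ)
    (Z : Ω → ℝ) (hZmeas : Measurable Z)
    (hZlaw : Measure.map Z ℙ
      = volume.withDensity (fun z => ENNReal.ofReal
          (if z ∈ Set.Icc (0 : ℝ) (M : ℝ) then
            ((M : ℝ) - 1) / M * (1 - z / M) ^ (M - 2) else 0)))
    (a₁ b₁ : ℝ) (ha₁ : 0 < a₁) (hbM : b₁ * M < 1) :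
    Measure.map (fun ω => a₁ * Z ω / (1 - b₁ * Z ω)) ℙ
      = volume.withDensity (fun p => ENNReal.ofReal
          (if p ∈ Set.Icc (0 : ℝ) (a₁ * M / (1 - b₁ * M)) then
            ((M : ℝ) - 1) * a₁ / (M * (a₁ + b₁ * p) ^ 2)
              * (1 - p / (M * (a₁ + b₁ * p))) ^ (M - 2)
          else 0)) := by
  set g : ℝ → ℝ := fun z => a₁ * z / (1 - b₁ * z)
  have hsub : Icc (0 : ℝ) M ⊆ {z | b₁ * z < 1} := fun z hz => mul_lt_one_of_mem_Icc hbM hz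
  have hne : ∀ z ∈ Icc (0 : ℝ) M, 1 - b₁ * z ≠ 0 := fun z hz => by
    linarith [mul_lt_one_of_mem_Icc hbM hz]
  have himage : g '' Icc 0 M = Icc 0 (a₁ * M / (1 - b₁ * M)) := by
    simpa [g] using (continuousOn_of_forall_continuousAt fun z hz =>
      (hasDerivAt_mul_div_one_sub a₁ b₁ (hne z hz)).continuousAt).image_Icc_of_monotoneOn
        (Nat.cast_nonneg M) ((monotoneOn_mul_div_one_sub b₁ ha₁.le).mono hsub)
  rw [show (fun ω => a₁ * Z ω / (1 - b₁ * Z ω)) = g ∘ Z from rfl,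
    ← Measure.map_map (by fun_prop) hZmeas, hZlaw]
  refine map_withDensity_eq_withDensity_of_monotoneOn measurableSet_Icc (by fun_prop)
    (fun z hz => (hasDerivAt_mul_div_one_sub a₁ b₁ (hne z hz)).hasDerivWithinAt)
    ((monotoneOn_mul_div_one_sub b₁ ha₁.le).mono hsub) ?_ ?_ fun z hz => ?_
  · exact Function.support_subset_iff'.2 fun z hz => by simp [hz]
  · rw [himage]
    exact Function.support_subset_iff'.2 fun p hp => by simp [hp]
  · rw [if_pos (himage ▸ mem_image_of_mem g hz), if_pos hz, ← ENNReal.ofReal_mul (by positivity),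
      mul_density_comp_mul_div_one_sub _ _ _ ha₁.ne' (hne z hz)]

/-- **Theorem 1 of the paper.** Let `M ≥ 2` and let `Z` have density
`f_Z(z) = ((M−1)/M)·(1 − z/M)^(M−2)` on `[0, M]`. Let `a₁ > 0`, `b₁ > 0` with
`b₁·M < 1`. Then `P_EH = a₁·Z/(1 − b₁·Z)` has density
`f(p) = ((M−1)a₁)/(M(a₁+b₁p)²) · (1 − p/(M(a₁+b₁p)))^(M−2)` on
`[0, a₁M/(1 − b₁M)]` and `0` elsewhere. -/
theorem harvested_power_density
    {Ω : Type*} [MeasureSpace Ω] [IsProbabilityMeasure (ℙ : Measure Ω)]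
    (M : ℕ) (hM : 2 ≤ M)
    (Z : Ω → ℝ) (hZmeas : Measurable Z)
    (hZlaw : Measure.map Z ℙ
      = volume.withDensity (fun z => ENNReal.ofReal
          (if z ∈ Set.Icc (0 : ℝ) (M : ℝ) then
            ((M : ℝ) - 1) / M * (1 - z / M) ^ (M - 2) else 0)))
    (a₁ b₁ : ℝ) (ha₁ : 0 < a₁) (hb₁ : 0 < b₁) (hbM : b₁ * M < 1) :
    Measure.map (fun ω => a₁ * Z ω / (1 - b₁ * Z ω)) ℙ
      = volume.withDensity (fun p => ENNReal.ofReal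
          (if p ∈ Set.Icc (0 : ℝ) (a₁ * M / (1 - b₁ * M)) then
            ((M : ℝ) - 1) * a₁ / (M * (a₁ + b₁ * p) ^ 2)
              * (1 - p / (M * (a₁ + b₁ * p))) ^ (M - 2)
          else 0)) :=
  harvested_power_density_general M Z hZmeas hZlaw a₁ b₁ ha₁ hbM
end

section
/- Let M ≥ 2 be an integer, and let b ≥ 0 and a be real numbers with a ≥ b·M. Let H and Z be independent real random variables, where H has the Gamma distribution with shape M and rate 1 (density x^{M−1}e^{−x}/(M−1)! on (0,∞)) and Z has density f_Z(z) = ((M−1)/M)(1 − z/M)^{M−2} on [0, M]. Then P(H < a − b·Z) = 1 − (M−1)! · e^{−a} · ∑_{k=0}^{M−1} ∑_{j=0}^{k} [ a^{k−j} · (−bM)^j / ((k−j)! · (M+j−1)!) ] · ∑_{n=0}^{∞} [ (j+1)_n / (M+j)_n ] · (bM)^n / n!, where (y)_n denotes the rising factorial, so that the inner series equals the confluent hypergeometric function ₁F₁(j+1; M+j; bM). -/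
/-!
Conditioning on `Z`, the outage probability is `E[F(a - bZ)]`, where
`F(t) = 1 - e^{-t} ∑_{k<M} t^k/k!` is the Gamma(M, 1) distribution function; this formula for `F`
holds only for `t ≥ 0`, which is where `a ≥ bM` enters.
Expanding `(a - bz)^k` binomially reduces `E[F(a - bZ)]` to the moments
`∫₀^M z^j e^{bz} (1 - z/M)^{M-2} dz`. Expanding `e^{bz}` and integrating term by term against
the Beta kernel `z^{j+n} (1 - z/M)^{M-2}` produces Kummer's series `₁F₁(j+1; M+j; bM)`.
-/

open MeasureTheory ProbabilityTheory Nat Set Finset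

theorem integral_pow_mul_one_sub_pow (p q : ℕ) :
    ∫ u in (0 : ℝ)..1, u ^ p * (1 - u) ^ q = (p ! * q ! : ℝ) / (p + q + 1)! := by
  have hbeta := Complex.Gamma_mul_Gamma_eq_betaIntegral (s := p + 1) (t := q + 1)
    (by simp; positivity) (by simp; positivity)
  rw [show (p + 1 + (q + 1) : ℂ) = ((p + q + 1 : ℕ) : ℂ) + 1 by push_cast; ring,
    Complex.Gamma_nat_eq_factorial, Complex.Gamma_nat_eq_factorial,
    Complex.Gamma_nat_eq_factorial, Complex.betaIntegral] at hbeta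
  simp only [add_sub_cancel_right, Complex.cpow_natCast] at hbeta
  rw [eq_div_iff (by positivity)]
  apply Complex.ofReal_injective
  push_cast
  rw [hbeta, mul_comm]
  congr 1
  exact_mod_cast intervalIntegral.integral_ofReal.symm

theorem integral_pow_mul_one_sub_div_pow (p q : ℕ) {c : ℝ} (hc : c ≠ 0) :
    ∫ z in (0 : ℝ)..c, z ^ p * (1 - z / c) ^ q
      = c ^ (p + 1) * (p ! * q ! : ℝ) / (p + q + 1)! := by
  have hscale : ∀ z : ℝ, z ^ p * (1 - z / c) ^ q = c ^ p * ((z / c) ^ p * (1 - z / c) ^ q) :=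
    fun z => by rw [div_pow]; field_simp
  simp_rw [hscale]
  rw [intervalIntegral.integral_const_mul,
    intervalIntegral.integral_comp_div (fun u => u ^ p * (1 - u) ^ q) hc, zero_div,
    div_self hc, integral_pow_mul_one_sub_pow, smul_eq_mul]
  ring

theorem ascPochhammer_eval_natCast_add_one (k n : ℕ) :
    (ascPochhammer ℝ n).eval ((k : ℝ) + 1) = ((k + n)! : ℝ) / k ! := by
  rw [eq_div_iff (by positivity), ← Nat.factorial_mul_ascFactorial, ← Nat.cast_add_one,
    ascPochhammer_nat_eq_natCast_ascFactorial]
  push_cast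
  ring

/-- Kummer's function `₁F₁(α; β; x)`. -/
noncomputable def confluentHypergeometric (α β x : ℝ) : ℝ :=
  ∑' n : ℕ, (ascPochhammer ℝ n).eval α / (ascPochhammer ℝ n).eval β * x ^ n / n !

theorem hasSum_integral_exp_mul {μ : Measure ℝ} {f : ℝ → ℝ} {c : ℝ} (hf : Integrable f μ)
    (hbdd : ∀ᵐ z ∂μ, |z| ≤ c) (b : ℝ) :
    HasSum (fun n : ℕ => b ^ n / n ! * ∫ z, z ^ n * f z ∂μ)
      (∫ z, Real.exp (b * z) * f z ∂μ) := by
  set F : ℕ → ℝ → ℝ := fun n z => (b * z) ^ n / n ! * f z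
  have hF_bound : ∀ n, ∀ᵐ z ∂μ, ‖(b * z) ^ n / (n ! : ℝ)‖ ≤ (|b| * c) ^ n / n ! := fun n => by
    filter_upwards [hbdd] with z hz
    rw [norm_div, norm_pow, Real.norm_eq_abs, abs_mul, RCLike.norm_natCast]
    gcongr
  have hF_int : ∀ n, Integrable (F n) μ := fun n =>
    hf.bdd_mul (by fun_prop) (hF_bound n)
  have hF_norm : ∀ n, ∫ z, ‖F n z‖ ∂μ ≤ (|b| * c) ^ n / n ! * ∫ z, ‖f z‖ ∂μ :=
      fun n => by
    rw [← integral_const_mul]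
    refine integral_mono_ae (hF_int n).norm (hf.norm.const_mul _) ?_
    filter_upwards [hF_bound n] with z hz
    rw [norm_mul]
    gcongr
  have hsum := hasSum_integral_of_summable_integral_norm hF_int
    (Summable.of_nonneg_of_le (fun n => integral_nonneg fun z => norm_nonneg _) hF_norm
      ((Real.summable_pow_div_factorial _).mul_right _))
  have hterm : ∀ n : ℕ, b ^ n / n ! * ∫ z, z ^ n * f z ∂μ = ∫ z, F n z ∂μ := fun n => by
    rw [← integral_const_mul]
    congr 1 with z
    simp only [F, mul_pow]
    ring
  have hexp : ∀ z, Real.exp (b * z) * f z = ∑' n, F n z := fun z => by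
    rw [tsum_mul_right, Real.exp_eq_exp_ℝ,
      (NormedSpace.expSeries_div_hasSum_exp (b * z)).tsum_eq]
  simp_rw [hterm, hexp]
  exact hsum

theorem integral_pow_mul_one_sub_div_pow_mul_exp (j m : ℕ) {c : ℝ} (hc : 0 < c) (b : ℝ) :
    ∫ z in (0 : ℝ)..c, z ^ j * (1 - z / c) ^ m * Real.exp (b * z)
      = c ^ (j + 1) * (j ! * m ! : ℝ) / (j + m + 1)!
          * confluentHypergeometric (j + 1) (j + m + 2) (b * c) := by
  have hbdd : ∀ᵐ z ∂volume.restrict (Ioc 0 c), |z| ≤ c :=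
    ae_restrict_of_forall_mem measurableSet_Ioc fun z hz =>
      abs_le.2 ⟨by linarith [hz.1], hz.2⟩
  have hsum := hasSum_integral_exp_mul (f := fun z => z ^ j * (1 - z / c) ^ m)
    (Continuous.integrableOn_Ioc (by fun_prop)) hbdd b
  simp_rw [intervalIntegral.integral_of_le hc.le, mul_comm _ (Real.exp _), ← hsum.tsum_eq,
    confluentHypergeometric, ← tsum_mul_left]
  refine tsum_congr fun n => ?_
  have hmoment : ∫ z in Ioc 0 c, z ^ n * (z ^ j * (1 - z / c) ^ m)
      = c ^ (j + n + 1) * ((j + n)! * m ! : ℝ) / (j + n + m + 1)! := by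
    rw [← intervalIntegral.integral_of_le hc.le, ← integral_pow_mul_one_sub_div_pow _ _ hc.ne']
    congr 1 with z
    ring
  rw [hmoment, show (j : ℝ) + m + 2 = ((j + m + 1 : ℕ) : ℝ) + 1 by push_cast; ring,
    ascPochhammer_eval_natCast_add_one, ascPochhammer_eval_natCast_add_one,
    show j + m + 1 + n = j + n + m + 1 by ring]
  field_simp
  ring

theorem hasDerivAt_sum_range_pow_div_factorial (n : ℕ) (x : ℝ) :
    HasDerivAt (fun x : ℝ => ∑ k ∈ range (n + 1), x ^ k / k !)
      (∑ k ∈ range n, x ^ k / k !) x := by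
  induction n with
  | zero => simpa using hasDerivAt_const x (1 : ℝ)
  | succ n ih =>
    simp_rw [sum_range_succ _ (n + 1)]
    refine (ih.add ((hasDerivAt_pow (n + 1) x).div_const ((n + 1)! : ℝ))).congr_deriv ?_
    rw [sum_range_succ, Nat.factorial_succ]
    push_cast
    field_simp

/-- For `t ≥ 0`, the distribution function of the Erlang law with shape `n` and rate `1`. -/
noncomputable def erlangCDF (n : ℕ) (t : ℝ) : ℝ :=
  1 - Real.exp (-t) * ∑ k ∈ range n, t ^ k / k !

@[fun_prop]
theorem continuous_erlangCDF (n : ℕ) : Continuous (erlangCDF n) := by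
  unfold erlangCDF
  fun_prop

theorem integral_pow_mul_exp_neg_div_factorial (n : ℕ) (t : ℝ) :
    ∫ x in (0 : ℝ)..t, x ^ n * Real.exp (-x) / n ! = erlangCDF (n + 1) t := by
  have hderiv : ∀ x : ℝ,
      HasDerivAt (fun x => -(Real.exp (-x) * ∑ k ∈ range (n + 1), x ^ k / k !))
        (x ^ n * Real.exp (-x) / n !) x := fun x => by
    refine (((Real.hasDerivAt_exp (-x)).comp x (hasDerivAt_neg x)).mul
      (hasDerivAt_sum_range_pow_div_factorial n x)).neg.congr_deriv ?_
    rw [sum_range_succ, Function.comp_apply]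
    ring
  rw [intervalIntegral.integral_eq_sub_of_hasDerivAt (fun x _ => hderiv x)
    (Continuous.intervalIntegrable (by fun_prop) _ _), erlangCDF]
  simp [sum_range_succ']
  ring

theorem erlangCDF_nonneg (n : ℕ) {t : ℝ} (ht : 0 ≤ t) : 0 ≤ erlangCDF (n + 1) t := by
  rw [← integral_pow_mul_exp_neg_div_factorial]
  exact intervalIntegral.integral_nonneg ht fun x hx => by have := hx.1; positivity

theorem exp_neg_sub_mul_sum_pow_div_factorial (N : ℕ) (a b z : ℝ) :
    Real.exp (-(a - b * z)) * ∑ k ∈ range N, (a - b * z) ^ k / k !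
      = Real.exp (-a) * ∑ k ∈ range N, ∑ j ∈ range (k + 1),
          a ^ (k - j) * (-b) ^ j / ((k - j)! * j !) * (z ^ j * Real.exp (b * z)) := by
  rw [show -(a - b * z) = -a + b * z by ring, Real.exp_add, mul_assoc, mul_sum]
  congr 1
  refine sum_congr rfl fun k _ => ?_
  rw [show a - b * z = -b * z + a by ring, add_pow, sum_div, mul_sum]
  refine sum_congr rfl fun j (hj : j ∈ range (k + 1)) => ?_
  rw [Nat.cast_choose ℝ (Nat.lt_succ_iff.1 (mem_range.1 hj))]
  field_simp
  ring

theorem integral_one_sub_div_pow_mul_erlangCDF (m : ℕ) (a b : ℝ) :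
    ∫ z in (0 : ℝ)..(m + 2),
        (m + 2 - 1) / (m + 2) * (1 - z / (m + 2)) ^ m * erlangCDF (m + 2) (a - b * z)
      = 1 - (m + 1)! * Real.exp (-a) * ∑ k ∈ range (m + 2), ∑ j ∈ range (k + 1),
          a ^ (k - j) * (-(b * (m + 2))) ^ j / ((k - j)! * (m + j + 1)!)
            * confluentHypergeometric (j + 1) (m + 2 + j) (b * (m + 2)) := by
  set c : ℝ := m + 2 with hc
  have hc0 : 0 < c := by positivity
  have hmass : ∫ z in (0 : ℝ)..c, (c - 1) / c * (1 - z / c) ^ m = 1 := by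
    have h := integral_pow_mul_one_sub_div_pow 0 m hc0.ne'
    simp only [pow_zero, one_mul, zero_add, Nat.factorial_succ] at h
    rw [intervalIntegral.integral_const_mul, h]
    push_cast
    field_simp
    ring
  have hexpand : ∀ z : ℝ, (c - 1) / c * (1 - z / c) ^ m
        * (Real.exp (-a) * ∑ k ∈ range (m + 2), ∑ j ∈ range (k + 1),
          a ^ (k - j) * (-b) ^ j / ((k - j)! * j !) * (z ^ j * Real.exp (b * z)))
      = ∑ k ∈ range (m + 2), ∑ j ∈ range (k + 1),
          (c - 1) / c * Real.exp (-a) * (a ^ (k - j) * (-b) ^ j / ((k - j)! * j !))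
            * (z ^ j * (1 - z / c) ^ m * Real.exp (b * z)) := fun z => by
    simp_rw [mul_sum]
    refine sum_congr rfl fun k _ => sum_congr rfl fun j _ => ?_
    ring
  simp_rw [erlangCDF, exp_neg_sub_mul_sum_pow_div_factorial, mul_sub, mul_one, hexpand]
  rw [intervalIntegral.integral_sub ((by fun_prop : Continuous _).intervalIntegrable _ _)
    ((by fun_prop : Continuous _).intervalIntegrable _ _), hmass,
    intervalIntegral.integral_finsetSum fun k _ =>
      (by fun_prop : Continuous _).intervalIntegrable _ _, mul_sum]
  congr 1
  refine sum_congr rfl fun k _ => ?_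
  rw [intervalIntegral.integral_finsetSum fun j _ =>
    (by fun_prop : Continuous _).intervalIntegrable _ _, mul_sum]
  refine sum_congr rfl fun j _ => ?_
  rw [intervalIntegral.integral_const_mul, integral_pow_mul_one_sub_div_pow_mul_exp j m hc0,
    show (j : ℝ) + m + 2 = c + j by ring, show j + m + 1 = m + j + 1 by ring,
    Nat.factorial_succ m, neg_mul_eq_neg_mul, mul_pow, hc]
  push_cast
  field_simp
  ring

theorem measure_lt_comp_eq_lintegral_of_indepFun {Ω : Type*} [MeasurableSpace Ω]
    {μ : Measure Ω} [IsFiniteMeasure μ] {X Y : Ω → ℝ} (hX : Measurable X) (hY : Measurable Y)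
    (hXY : IndepFun X Y μ) {g : ℝ → ℝ} (hg : Measurable g) :
    μ {ω | X ω < g (Y ω)} = ∫⁻ y, μ.map X (Iio (g y)) ∂μ.map Y := by
  have hs : MeasurableSet {p : ℝ × ℝ | p.2 < g p.1} :=
    measurableSet_lt measurable_snd (hg.comp measurable_fst)
  rw [show (fun y => μ.map X (Iio (g y))) = fun y => μ.map X (Prod.mk y ⁻¹' {p | p.2 < g p.1})
    from rfl, ← Measure.prod_apply hs, ← hXY.symm.map_prod_eq_prod_map_map hY.aemeasurable
    hX.aemeasurable, Measure.map_apply (hY.prodMk hX) hs]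
  rfl

theorem withDensity_ofReal_ite {α : Type*} [MeasurableSpace α] (μ : Measure α) {p : α → Prop}
    [DecidablePred p] (hp : MeasurableSet {x | p x}) (f : α → ℝ) :
    μ.withDensity (fun x => ENNReal.ofReal (if p x then f x else 0))
      = (μ.restrict {x | p x}).withDensity (fun x => ENNReal.ofReal (f x)) := by
  rw [← withDensity_indicator hp]
  congr 1 with x
  by_cases hx : p x <;> simp [hx]

theorem restrict_Ioi_withDensity_ofReal_apply_Iio {g : ℝ → ℝ} {l t : ℝ} (hlt : l ≤ t)
    (hg : IntervalIntegrable g volume l t) (hg0 : ∀ x ∈ Ioo l t, 0 ≤ g x) :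
    (volume.restrict (Ioi l)).withDensity (fun x => ENNReal.ofReal (g x)) (Iio t)
      = ENNReal.ofReal (∫ x in l..t, g x) := by
  rw [withDensity_apply _ measurableSet_Iio, Measure.restrict_restrict measurableSet_Iio,
    Iio_inter_Ioi, ← ofReal_integral_eq_lintegral_ofReal (hg.1.mono_set Ioo_subset_Ioc_self)
      (ae_restrict_of_forall_mem measurableSet_Ioo hg0),
    intervalIntegral.integral_of_le hlt, integral_Ioc_eq_integral_Ioo]

theorem lintegral_restrict_Icc_withDensity_ofReal {Φ : ℝ → ENNReal} {f G : ℝ → ℝ} {l u : ℝ}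
    (hlu : l ≤ u) (hf : Continuous f) (hG : Continuous G) (hf0 : ∀ z ∈ Icc l u, 0 ≤ f z)
    (hG0 : ∀ z ∈ Icc l u, 0 ≤ G z) (hΦ : ∀ z ∈ Icc l u, Φ z = ENNReal.ofReal (G z)) :
    ∫⁻ z, Φ z ∂(volume.restrict (Icc l u)).withDensity (fun z => ENNReal.ofReal (f z))
      = ENNReal.ofReal (∫ z in l..u, f z * G z) := by
  have hae : ∀ᵐ z ∂(volume.restrict (Icc l u)).withDensity (fun z => ENNReal.ofReal (f z)),
      Φ z = ENNReal.ofReal (G z) :=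
    (withDensity_absolutelyContinuous _ _).ae_le (ae_restrict_of_forall_mem measurableSet_Icc hΦ)
  rw [lintegral_congr_ae hae, lintegral_withDensity_eq_lintegral_mul _ (by fun_prop) (by fun_prop),
    intervalIntegral.integral_of_le hlu, ← integral_Icc_eq_integral_Ioc,
    ofReal_integral_eq_lintegral_ofReal
      (by fun_prop : Continuous fun z => f z * G z).integrableOn_Icc
      (ae_restrict_of_forall_mem measurableSet_Icc fun z hz => mul_nonneg (hf0 z hz) (hG0 z hz))]
  exact setLIntegral_congr_fun measurableSet_Icc fun z hz => (ENNReal.ofReal_mul (hf0 z hz)).symm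

theorem withDensity_erlangPDF_apply_Iio (n : ℕ) {t : ℝ} (ht : 0 ≤ t) :
    volume.withDensity (fun x => ENNReal.ofReal (if 0 < x then x ^ n * Real.exp (-x) / n ! else 0))
        (Iio t)
      = ENNReal.ofReal (erlangCDF (n + 1) t) := by
  rw [withDensity_ofReal_ite _ (p := (0 < ·)) measurableSet_Ioi,
    ← integral_pow_mul_exp_neg_div_factorial]
  exact restrict_Ioi_withDensity_ofReal_apply_Iio ht
    ((by fun_prop : Continuous _).intervalIntegrable _ _) fun x hx => by
    have := hx.1; positivity

/-- **Theorem 2 of the paper.** Let `M ≥ 2`, `b ≥ 0`, `a ≥ b·M`.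
Let `H` and `Z` be independent, `H ~ Gamma(M, 1)` and `Z` with the generalized-Pareto
density `((M−1)/M)(1 − z/M)^(M−2)` on `[0, M]`. Then
`P(H < a − b·Z) = 1 − (M−1)!·e^(−a)·∑_{k=0}^{M−1} ∑_{j=0}^{k}
  (a^(k−j)(−bM)^j/((k−j)!(M+j−1)!)) · ₁F₁(j+1; M+j; bM)`,
where `₁F₁` is written as its defining series with rising factorials. -/
theorem hd_outage_probability_closed_form
    {Ω : Type*} [MeasureSpace Ω] [IsProbabilityMeasure (ℙ : Measure Ω)]
    (M : ℕ) (hM : 2 ≤ M) (a b : ℝ) (hb : 0 ≤ b) (hab : b * M ≤ a)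
    (H Z : Ω → ℝ) (hHmeas : Measurable H) (hZmeas : Measurable Z)
    (hindep : IndepFun H Z ℙ)
    (hHlaw : Measure.map H ℙ
      = volume.withDensity (fun x => ENNReal.ofReal
          (if 0 < x then x ^ (M - 1) * Real.exp (-x) / (Nat.factorial (M - 1)) else 0)))
    (hZlaw : Measure.map Z ℙ
      = volume.withDensity (fun z => ENNReal.ofReal
          (if z ∈ Set.Icc (0 : ℝ) (M : ℝ) then
            ((M : ℝ) - 1) / M * (1 - z / M) ^ (M - 2) else 0))) :
    ℙ {ω | H ω < a - b * Z ω}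
      = ENNReal.ofReal (1 - (Nat.factorial (M - 1) : ℝ) * Real.exp (-a)
          * ∑ k ∈ Finset.range M, ∑ j ∈ Finset.range (k + 1),
              (a ^ (k - j) * (-(b * M)) ^ j
                  / ((Nat.factorial (k - j) : ℝ) * (Nat.factorial (M + j - 1) : ℝ)))
                * ∑' n : ℕ,
                    ((ascPochhammer ℝ n).eval ((j : ℝ) + 1)
                        / (ascPochhammer ℝ n).eval ((M : ℝ) + j))
                      * (b * M) ^ n / (Nat.factorial n : ℝ)) := by
  obtain ⟨m, rfl⟩ := Nat.exists_eq_add_of_le' hM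
  simp only [show m + 2 - 1 = m + 1 from rfl, show m + 2 - 2 = m from rfl,
    show ∀ j, m + 2 + j - 1 = m + j + 1 from fun j => by omega, Nat.cast_add, Nat.cast_ofNat]
    at hHlaw hZlaw hab ⊢
  have hthreshold : ∀ z ∈ Set.Icc (0 : ℝ) (m + 2), 0 ≤ a - b * z := fun z hz => by
    nlinarith [mul_le_mul_of_nonneg_left hz.2 hb]
  have hdensity : ∀ z ∈ Set.Icc (0 : ℝ) (m + 2),
      0 ≤ (m + 2 - 1) / (m + 2) * (1 - z / (m + 2)) ^ m := fun z hz => by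
      have : z / (m + 2) ≤ 1 := (div_le_one (by positivity)).2 hz.2
      have : (0 : ℝ) ≤ m := m.cast_nonneg
      exact mul_nonneg (div_nonneg (by linarith) (by positivity)) (pow_nonneg (by linarith) m)
  rw [measure_lt_comp_eq_lintegral_of_indepFun hHmeas hZmeas hindep (g := fun z => a - b * z)
    (by fun_prop), hZlaw, withDensity_ofReal_ite _ (p := (· ∈ Set.Icc _ _)) measurableSet_Icc,
    ofPred_mem_eq, lintegral_restrict_Icc_withDensity_ofReal (by positivity) (by fun_prop)
      (by fun_prop) hdensity
      (fun z hz => erlangCDF_nonneg (m + 1) (hthreshold z hz))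
      (fun z hz => by rw [hHlaw]; exact withDensity_erlangPDF_apply_Iio _ (hthreshold z hz)),
    integral_one_sub_div_pow_mul_erlangCDF]
  rfl
end
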